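/- arXiv:2312.02899 — 2 statements merged into one kernel-verified Lean document; each statement's English description precedes it below -/
import Mathlib

section
/- Suppose w is a bounded weight sequence with inf_n w_n > 0, defining a surjective weighted backward shift B_w on ℓ^p (1 ≤ p < ∞) with forward shift S. If ∑_{n=1}^∞ (inf_i M_i^n)^p < ∞, then there exists a nonzero x ∈ ℓ^p such that ‖S^n x‖ ≥ 1 for every n ∈ ℕ (hence B_w is not strongly hypercyclic). -/
/-!
Choose for every `m` an index `i m` at which `M_{i m + 1}^{m+1}` is within a factor two of
`inf_i M_{i+1}^{m+1}`; these near-minimal products `c m` are then `p`-summable. Stacking their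
`p`-th powers on the fibres of `i` yields `x ∈ ℓ^p` with `c m ≤ |x (i m)|`, and the coordinate
`i m + m + 1` of `S^{m+1} x` is `x (i m) / c m`, of modulus at least one.
-/

open Filter Topology

/-- `Mw w i k = w i * w (i+1) * ⋯ * w (i+k-1)`. -/
noncomputable def Mw (w : ℕ → ℝ) (i k : ℕ) : ℝ := ∏ t ∈ Finset.range k, w (i + t)

/-- The `n`-th power of the weighted forward shift associated to `B_w`. -/
noncomputable def Siter (w : ℕ → ℝ) (n : ℕ) (x : ℕ → ℝ) : ℕ → ℝ :=
  fun j => if j < n then 0 else x (j - n) / Mw w (j - n + 1) n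

section WeightProducts

variable {w : ℕ → ℝ} {δ : ℝ}

lemma pow_le_Mw (hδ : 0 ≤ δ) (hw : ∀ n, 1 ≤ n → δ ≤ w n) (i k : ℕ) :
    δ ^ k ≤ Mw w (i + 1) k :=
  calc δ ^ k = ∏ _t ∈ Finset.range k, δ := by simp
    _ ≤ Mw w (i + 1) k := Finset.prod_le_prod (fun _ _ => hδ) (fun _ _ => hw _ (by omega))

lemma Mw_pos (hδ : 0 < δ) (hw : ∀ n, 1 ≤ n → δ ≤ w n) (i k : ℕ) : 0 < Mw w (i + 1) k :=
  (pow_pos hδ k).trans_le (pow_le_Mw hδ.le hw i k)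

lemma exists_Mw_lt_two_mul_iInf (hδ : 0 < δ) (hw : ∀ n, 1 ≤ n → δ ≤ w n) (k : ℕ) :
    ∃ i, Mw w (i + 1) k < 2 * ⨅ j, Mw w (j + 1) k := by
  have hinf : 0 < ⨅ j, Mw w (j + 1) k :=
    (pow_pos hδ k).trans_le (le_ciInf fun j => pow_le_Mw hδ.le hw j k)
  exact exists_lt_of_ciInf_lt (by linarith)

lemma Siter_add (n j : ℕ) (x : ℕ → ℝ) : Siter w n x (j + n) = x j / Mw w (j + 1) n := by
  simp [Siter]

lemma summable_abs_Siter_rpow {p : ℝ} (hp : 0 < p) (hδ : 0 < δ) (hw : ∀ n, 1 ≤ n → δ ≤ w n)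
    {x : ℕ → ℝ} (hx : Summable fun j => |x j| ^ p) (n : ℕ) :
    Summable fun j => |Siter w n x j| ^ p := by
  refine (summable_nat_add_iff n).mp ?_
  refine .of_nonneg_of_le (fun _ => by positivity) (fun j => ?_) (hx.div_const ((δ ^ n) ^ p))
  have hbound : |Siter w n x (j + n)| ≤ |x j| / δ ^ n := by
    rw [Siter_add, abs_div, abs_of_pos (Mw_pos hδ hw j n)]
    exact div_le_div_of_nonneg_left (abs_nonneg _) (pow_pos hδ n) (pow_le_Mw hδ.le hw j n)
  calc |Siter w n x (j + n)| ^ p ≤ (|x j| / δ ^ n) ^ p :=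
        Real.rpow_le_rpow (abs_nonneg _) hbound hp.le
    _ = |x j| ^ p / (δ ^ n) ^ p := Real.div_rpow (abs_nonneg _) (pow_pos hδ n).le p

end WeightProducts

lemma summable_rpow_of_le_const_mul {α : Type*} {p K : ℝ} (hp : 0 ≤ p) (hK : 0 < K)
    {a c : α → ℝ} (hc : 0 ≤ c) (hca : ∀ m, c m ≤ K * a m) (ha : Summable fun m => a m ^ p) :
    Summable fun m => c m ^ p := by
  refine .of_nonneg_of_le (fun m => Real.rpow_nonneg (hc m) p) (fun m => ?_) (ha.mul_left (K ^ p))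
  have ham : 0 ≤ a m := (mul_nonneg_iff_of_pos_left hK).mp ((hc m).trans (hca m))
  calc c m ^ p ≤ (K * a m) ^ p := Real.rpow_le_rpow (hc m) (hca m) hp
    _ = K ^ p * a m ^ p := Real.mul_rpow hK.le ham

lemma exists_summable_le_comp {α β : Type*} {f : α → ℝ} (hf0 : 0 ≤ f) (hf : Summable f)
    (g : α → β) : ∃ y : β → ℝ, 0 ≤ y ∧ Summable y ∧ ∀ a, f a ≤ y (g a) := by
  refine ⟨fun b => ∑' a : g ⁻¹' {b}, f a, fun b => tsum_nonneg fun a => hf0 a,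
    (hf.hasSum.tsum_fiberwise g).summable, fun a => ?_⟩
  exact (hf.subtype (· ∈ g ⁻¹' {g a})).le_tsum ⟨a, rfl⟩ fun _ _ => hf0 _

lemma exists_summable_rpow_le_abs_comp {α β : Type*} {p : ℝ} (hp : 0 < p) {c : α → ℝ}
    (hc : 0 ≤ c) (hcs : Summable fun a => c a ^ p) (g : α → β) :
    ∃ x : β → ℝ, Summable (fun b => |x b| ^ p) ∧ ∀ a, c a ≤ |x (g a)| := by
  obtain ⟨y, hy0, hys, hcy⟩ :=
    exists_summable_le_comp (fun a => Real.rpow_nonneg (hc a) p) hcs g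
  have hxp : ∀ b, |y b ^ p⁻¹| ^ p = y b := fun b => by
    rw [abs_of_nonneg (Real.rpow_nonneg (hy0 b) _), Real.rpow_inv_rpow (hy0 b) hp.ne']
  refine ⟨fun b => y b ^ p⁻¹, by simpa only [hxp] using hys, fun a => ?_⟩
  calc c a = (c a ^ p) ^ p⁻¹ := (Real.rpow_rpow_inv (hc a) hp.ne').symm
    _ ≤ y (g a) ^ p⁻¹ := Real.rpow_le_rpow (Real.rpow_nonneg (hc a) p) (hcy a) (by positivity)
    _ = |y (g a) ^ p⁻¹| := (abs_of_nonneg (Real.rpow_nonneg (hy0 _) _)).symm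

theorem necessary_condition_lp_general (p : ℝ) (hp : 1 ≤ p)
    (w : ℕ → ℝ)
    (hlb : ∃ δ > (0 : ℝ), ∀ n, 1 ≤ n → δ ≤ w n)
    (hsum : Summable (fun n : ℕ => (⨅ i : ℕ, Mw w (i + 1) (n + 1)) ^ p)) :
    ∃ x : ℕ → ℝ, Summable (fun j => |x j| ^ p) ∧ x ≠ 0 ∧
      ∀ n, 1 ≤ n → 1 ≤ (∑' j, |Siter w n x j| ^ p) ^ (1 / p) := by
  obtain ⟨δ, hδ, hδw⟩ := hlb
  have hp0 : 0 < p := by linarith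
  choose i hi using fun m => exists_Mw_lt_two_mul_iInf hδ hδw (m + 1)
  set c : ℕ → ℝ := fun m => Mw w (i m + 1) (m + 1)
  have hc0 : ∀ m, 0 < c m := fun m => Mw_pos hδ hδw _ _
  have hcs : Summable fun m => c m ^ p :=
    summable_rpow_of_le_const_mul hp0.le two_pos (fun m => (hc0 m).le) (fun m => (hi m).le) hsum
  obtain ⟨x, hx, hcx⟩ := exists_summable_rpow_le_abs_comp hp0 (fun m => (hc0 m).le) hcs i
  refine ⟨x, hx, fun h => by simpa [h] using (hc0 0).trans_le (hcx 0), fun n hn => ?_⟩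
  obtain ⟨m, rfl⟩ : ∃ m, n = m + 1 := ⟨n - 1, by omega⟩
  have hone : 1 ≤ |Siter w (m + 1) x (i m + (m + 1))| := by
    rw [Siter_add, abs_div, abs_of_pos (hc0 m), one_le_div (hc0 m)]
    exact hcx m
  have hle : |Siter w (m + 1) x (i m + (m + 1))| ^ p ≤ ∑' j, |Siter w (m + 1) x j| ^ p :=
    (summable_abs_Siter_rpow hp0 hδ hδw hx _).le_tsum _ fun _ _ => by positivity
  exact Real.one_le_rpow ((Real.one_le_rpow hone hp0.le).trans hle) (by positivity)

/-- Necessary condition for strong hypercyclicity on `ℓ^p`: if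
`∑_{n≥1} (inf_{i≥1} M_i^n)^p < ∞`, then there is a nonzero `x ∈ ℓ^p` with
`‖S^n x‖_p ≥ 1` for every `n ≥ 1` (so `B_w` is not strongly hypercyclic). -/
theorem necessary_condition_lp (p : ℝ) (hp : 1 ≤ p)
    (w : ℕ → ℝ) (hw : ∀ n, 1 ≤ n → 0 < w n)
    (hub : ∃ C : ℝ, ∀ n, 1 ≤ n → w n ≤ C)
    (hlb : ∃ δ > (0 : ℝ), ∀ n, 1 ≤ n → δ ≤ w n)
    (hsum : Summable (fun n : ℕ => (⨅ i : ℕ, Mw w (i + 1) (n + 1)) ^ p)) :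
    ∃ x : ℕ → ℝ, Summable (fun j => |x j| ^ p) ∧ x ≠ 0 ∧
      ∀ n, 1 ≤ n → 1 ≤ (∑' j, |Siter w n x j| ^ p) ^ (1 / p) :=
  necessary_condition_lp_general p hp w hlb hsum
end

section
/- Define a_1 = 1 and a_k = 4 a_{k-1} + 1 for k ≥ 2, and let w be defined by w_n = 2 for odd n and w_n = (2 w_{n/2})^{-1} for even n. Then M_1^{a_k} = 2^k for every k ∈ ℕ, where M_1^m = w_1 ⋯ w_m. -/
open Filter Topology

/-- The weight sequence: `w n = 2` for odd `n`, `w n = (2 * w (n/2))⁻¹` for even `n`. -/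
noncomputable def petrovW : ℕ → ℝ
  | 0 => 2
  | (n + 1) => if (n + 1) % 2 = 1 then 2 else (2 * petrovW ((n + 1) / 2))⁻¹
decreasing_by omega

/-- The sequence `a_1 = 1`, `a_k = 4 a_{k-1} + 1` (with `aSeq 0 = 0` as junk value). -/
def aSeq : ℕ → ℕ
  | 0 => 0
  | 1 => 1
  | (k + 2) => 4 * aSeq (k + 1) + 1

/-! Pairing consecutive factors, `w (2j+1) * w (2j+2) = 2 * (2 * w (j+1))⁻¹ = (w (j+1))⁻¹`, gives
`M_1^{2m} = (M_1^m)⁻¹` and hence `M_1^{4m} = M_1^m`. As `a_{k+1} = 4 a_k + 1` and the weight at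
an odd index is `2`, this yields `M_1^{a_{k+1}} = 2 M_1^{a_k}`. -/

lemma petrovW_two_mul_add_one (n : ℕ) : petrovW (2 * n + 1) = 2 := by
  rw [petrovW, if_pos (by omega)]

lemma petrovW_two_mul_add_two (n : ℕ) : petrovW (2 * n + 2) = (2 * petrovW (n + 1))⁻¹ := by
  rw [petrovW, if_neg (by omega), show (2 * n + 1 + 1) / 2 = n + 1 by omega]

lemma Mw_succ (w : ℕ → ℝ) (i k : ℕ) : Mw w i (k + 1) = Mw w i k * w (i + k) :=
  Finset.prod_range_succ _ _

lemma Mw_petrovW_one_two_mul (m : ℕ) : Mw petrovW 1 (2 * m) = (Mw petrovW 1 m)⁻¹ := by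
  induction m with
  | zero => simp [Mw]
  | succ m ih =>
    have hpair : petrovW (2 * m + 1) * petrovW (2 * m + 2) = (petrovW (m + 1))⁻¹ := by
      rw [petrovW_two_mul_add_one, petrovW_two_mul_add_two, mul_inv, ← mul_assoc,
        mul_inv_cancel₀ two_ne_zero, one_mul]
    rw [show 2 * (m + 1) = 2 * m + 1 + 1 by ring, Mw_succ, Mw_succ, mul_assoc, ih,
      add_comm 1 (2 * m + 1), add_comm 1 (2 * m), hpair, Mw_succ, mul_inv, add_comm 1 m]

lemma Mw_petrovW_one_four_mul (m : ℕ) : Mw petrovW 1 (4 * m) = Mw petrovW 1 m := by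
  rw [show 4 * m = 2 * (2 * m) by ring, Mw_petrovW_one_two_mul, Mw_petrovW_one_two_mul, inv_inv]

lemma aSeq_succ {k : ℕ} (hk : 1 ≤ k) : aSeq (k + 1) = 4 * aSeq k + 1 := by
  obtain ⟨j, rfl⟩ := Nat.exists_eq_add_of_le' hk
  rfl

/-- For the weight sequence `petrovW` and `a_1 = 1`, `a_k = 4 a_{k-1} + 1`:
`M_1^{a_k} = 2^k` for every `k ≥ 1`. -/
theorem petrovW_M_one_aSeq (k : ℕ) (hk : 1 ≤ k) :
    Mw petrovW 1 (aSeq k) = 2 ^ k := by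
  induction k, hk using Nat.le_induction with
  | base => simpa [Mw, aSeq] using petrovW_two_mul_add_one 0
  | succ k hk ih =>
    rw [aSeq_succ hk, Mw_succ, Mw_petrovW_one_four_mul, ih, add_comm 1,
      show 4 * aSeq k + 1 = 2 * (2 * aSeq k) + 1 by ring, petrovW_two_mul_add_one, pow_succ]
end
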